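/- Fix α ≥ 0 and let μ_α be the Lie bracket on ℝ³ whose only nonzero brackets on the standard basis e1,e2,e3 are [e2,e1] = α·e2 − e3 and [e3,e1] = e2 + α·e3 (the solvable Lie algebra s_{3,3}). Then for every nondegenerate symmetric bilinear form B on ℝ³, the bracket μ_α is NOT in the null cone of the O(B)-action; that is, 0 does not lie in the closure of the orbit O(B)·μ_α. -/
import Mathlib


/-- The isometry group `O(B)` of a bilinear form `B`. -/
def IsometryGrp {V : Type*} [AddCommGroup V] [Module ℝ V]
    (B : LinearMap.BilinForm ℝ V) : Set (V ≃ₗ[ℝ] V) :=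
  {A | ∀ x y, B (A x) (A y) = B x y}

/-- `μ` is in the null cone of the `O(B)`-action: `0` lies in the closure of the orbit
`O(B)·μ`, `(A·μ)(x,y) = A⁻¹(μ(Ax,Ay))`, in the topology of pointwise convergence. -/
def InNullCone {V : Type*} [AddCommGroup V] [Module ℝ V] [TopologicalSpace V]
    (B : LinearMap.BilinForm ℝ V) (μ : V → V → V) : Prop :=
  (0 : V → V → V) ∈
    closure {f : V → V → V | ∃ A ∈ IsometryGrp B, f = fun x y => A.symm (μ (A x) (A y))}

/-- The bracket of the Lie algebra `s_{3,3}` on `ℝ³` (standard basis `e1 = e 0`, `e2 = e 1`,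
`e3 = e 2`): the bilinear alternating extension of `[e2,e1] = α•e2 − e3`,
`[e3,e1] = e2 + α•e3`, `[e2,e3] = 0`. -/
def s33bracket (α : ℝ) : (Fin 3 → ℝ) → (Fin 3 → ℝ) → (Fin 3 → ℝ) :=
  fun x y => ![0,
    α * (x 1 * y 0 - x 0 * y 1) + (x 2 * y 0 - x 0 * y 2),
    -(x 1 * y 0 - x 0 * y 1) + α * (x 2 * y 0 - x 0 * y 2)]

/-! ### Auxiliary definitions -/

/-- Standard basis vectors of `ℝ³`. -/
def ee (i : Fin 3) : Fin 3 → ℝ := Pi.single i 1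

/-- Cross product on `ℝ³`. -/
def cp (x y : Fin 3 → ℝ) : Fin 3 → ℝ :=
  ![x 1 * y 2 - x 2 * y 1, x 2 * y 0 - x 0 * y 2, x 0 * y 1 - x 1 * y 0]

/-- Cofactor matrix of a `3×3` matrix. -/
def cof (N : Matrix (Fin 3) (Fin 3) ℝ) : Matrix (Fin 3) (Fin 3) ℝ :=
  !![N 1 1 * N 2 2 - N 1 2 * N 2 1, -(N 1 0 * N 2 2 - N 1 2 * N 2 0), N 1 0 * N 2 1 - N 1 1 * N 2 0;
     -(N 0 1 * N 2 2 - N 0 2 * N 2 1), N 0 0 * N 2 2 - N 0 2 * N 2 0, -(N 0 0 * N 2 1 - N 0 1 * N 2 0);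
     N 0 1 * N 1 2 - N 0 2 * N 1 1, -(N 0 0 * N 1 2 - N 0 2 * N 1 0), N 0 0 * N 1 1 - N 0 1 * N 1 0]

/-- The matrix `L(f)` associated with a bracket `f` via the cross product. -/
def Lm (f : (Fin 3 → ℝ) → (Fin 3 → ℝ) → (Fin 3 → ℝ)) : Matrix (Fin 3) (Fin 3) ℝ :=
  Matrix.of fun a m => f (ee (m + 1)) (ee (m + 2)) a

/-- The orbit invariant `Φ`. -/
noncomputable def Phi (Bm : Matrix (Fin 3) (Fin 3) ℝ)
    (f : (Fin 3 → ℝ) → (Fin 3 → ℝ) → (Fin 3 → ℝ)) : ℝ :=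
  ((Lm f * Bm).trace) ^ 4 + (((Lm f * Bm) * (Lm f * Bm)).trace) ^ 2

/-- The matrix of a linear equivalence of `ℝ³`. -/
def matE (A : (Fin 3 → ℝ) ≃ₗ[ℝ] (Fin 3 → ℝ)) : Matrix (Fin 3) (Fin 3) ℝ :=
  Matrix.of fun i j => A (ee j) i

/-! ### Basic lemmas -/

lemma decomp3 (x : Fin 3 → ℝ) : x = x 0 • ee 0 + x 1 • ee 1 + x 2 • ee 2 := by
  funext i
  fin_cases i <;> simp [ee, Pi.single_apply]

lemma cp_equivariant (N : Matrix (Fin 3) (Fin 3) ℝ) (x y : Fin 3 → ℝ) :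
    cp (N.mulVec x) (N.mulVec y) = (cof N).mulVec (cp x y) := by
  funext i
  fin_cases i <;>
    simp [cp, cof, Matrix.mulVec, dotProduct, Fin.sum_univ_three] <;> ring

lemma transpose_mul_cof (N : Matrix (Fin 3) (Fin 3) ℝ) :
    N.transpose * cof N = N.det • 1 := by
  ext i j
  fin_cases i <;> fin_cases j <;>
    simp [cof, Matrix.mul_apply, Fin.sum_univ_three, Matrix.det_fin_three,
      Matrix.one_apply] <;> ring

lemma mulVec_ee (M : Matrix (Fin 3) (Fin 3) ℝ) (m : Fin 3) :
    M.mulVec (ee m) = fun i => M i m := by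
  funext i
  simp [Matrix.mulVec, dotProduct, ee, Pi.single_apply]

lemma cp_ee (m : Fin 3) : cp (ee (m + 1)) (ee (m + 2)) = ee m := by
  fin_cases m <;> (funext i; fin_cases i <;> simp [cp, ee, Pi.single_apply])

lemma bilin_expand (B : LinearMap.BilinForm ℝ (Fin 3 → ℝ)) (x y : Fin 3 → ℝ) :
    B x y = ∑ i, ∑ j, x i * B (ee i) (ee j) * y j := by
  conv_lhs => rw [decomp3 x, decomp3 y]
  simp [map_add, map_smul, LinearMap.add_apply, LinearMap.smul_apply, smul_eq_mul,
    Fin.sum_univ_three]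
  ring

lemma matE_mulVec (A : (Fin 3 → ℝ) ≃ₗ[ℝ] (Fin 3 → ℝ)) (x : Fin 3 → ℝ) :
    (matE A).mulVec x = A x := by
  funext i
  have : A x = A (x 0 • ee 0 + x 1 • ee 1 + x 2 • ee 2) := by rw [← decomp3 x]
  rw [this]
  simp [matE, Matrix.mulVec, dotProduct, Fin.sum_univ_three, map_add, map_smul,
    mul_comm]

lemma matE_mul_symm (A : (Fin 3 → ℝ) ≃ₗ[ℝ] (Fin 3 → ℝ)) :
    matE A * matE A.symm = 1 := by
  ext i j
  have h : (matE A * matE A.symm) i j = ((matE A).mulVec (fun k => A.symm (ee j) k)) i := by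
    simp [Matrix.mul_apply, Matrix.mulVec, dotProduct, matE]
  rw [h, matE_mulVec]
  simp only [LinearEquiv.apply_symm_apply]
  simp [ee, Matrix.one_apply, Pi.single_apply, eq_comm]

lemma iso_matrix (B : LinearMap.BilinForm ℝ (Fin 3 → ℝ)) (A : (Fin 3 → ℝ) ≃ₗ[ℝ] (Fin 3 → ℝ))
    (hA : ∀ x y, B (A x) (A y) = B x y) :
    (matE A).transpose * (Matrix.of fun i j => B (ee i) (ee j)) * matE A
      = Matrix.of fun i j => B (ee i) (ee j) := by
  ext i j
  have h1 : B (A (ee i)) (A (ee j)) = B (ee i) (ee j) := hA _ _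
  rw [bilin_expand B (A (ee i)) (A (ee j))] at h1
  simp only [Matrix.of_apply]
  rw [← h1]
  simp [Matrix.mul_apply, Fin.sum_univ_three, matE]
  ring

lemma Lm_s33 (α : ℝ) : Lm (s33bracket α) = !![0,0,0; 0,1,-α; 0,α,1] := by
  ext a m
  fin_cases a <;> fin_cases m <;>
    simp [Lm, s33bracket, ee, Pi.single_apply, Matrix.vecHead, Matrix.vecTail]

lemma s33_eq_mulVec (α : ℝ) (x y : Fin 3 → ℝ) :
    s33bracket α x y
      = (!![0,0,0; 0,1,-α; 0,α,1] : Matrix (Fin 3) (Fin 3) ℝ).mulVec (cp x y) := by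
  funext i
  fin_cases i <;>
    simp [s33bracket, cp, Matrix.mulVec, dotProduct, Fin.sum_univ_three] <;> ring

lemma Phi_zero (Bm : Matrix (Fin 3) (Fin 3) ℝ) : Phi Bm 0 = 0 := by
  have h : Lm (0 : (Fin 3 → ℝ) → (Fin 3 → ℝ) → (Fin 3 → ℝ)) = 0 := by
    ext a m; simp [Lm]
  simp [Phi, h]

lemma Phi_continuous (Bm : Matrix (Fin 3) (Fin 3) ℝ) : Continuous (Phi Bm) := by
  have hL : Continuous fun f : (Fin 3 → ℝ) → (Fin 3 → ℝ) → (Fin 3 → ℝ) => Lm f := by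
    apply continuous_matrix
    intro i j
    exact (continuous_apply i).comp
      ((continuous_apply (ee (j + 2))).comp (continuous_apply (ee (j + 1))))
  have h1 : Continuous fun f : (Fin 3 → ℝ) → (Fin 3 → ℝ) → (Fin 3 → ℝ) => Lm f * Bm :=
    hL.matrix_mul continuous_const
  exact ((h1.matrix_trace).pow 4).add (((h1.matrix_mul h1).matrix_trace).pow 2)

/-! ### Invariance of `Φ` along the orbit -/

lemma phi_inv (α : ℝ) (B : LinearMap.BilinForm ℝ (Fin 3 → ℝ))
    (hdet : (Matrix.of fun i j => B (ee i) (ee j) : Matrix (Fin 3) (Fin 3) ℝ).det ≠ 0)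
    (A : (Fin 3 → ℝ) ≃ₗ[ℝ] (Fin 3 → ℝ)) (hA : ∀ x y, B (A x) (A y) = B x y) :
    Phi (Matrix.of fun i j => B (ee i) (ee j))
      (fun x y => A.symm (s33bracket α (A x) (A y)))
      = Phi (Matrix.of fun i j => B (ee i) (ee j)) (s33bracket α) := by
  set Bm : Matrix (Fin 3) (Fin 3) ℝ := Matrix.of fun i j => B (ee i) (ee j) with hBm
  set Am := matE A with hAm
  set Sm := matE A.symm with hSm
  set L0 : Matrix (Fin 3) (Fin 3) ℝ := !![0,0,0;0,1,-α;0,α,1] with hL0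
  have hAS : Am * Sm = 1 := matE_mul_symm A
  have hiso : Am.transpose * Bm * Am = Bm := iso_matrix B A hA
  have hdet2 : Am.det * Am.det = 1 := by
    have h := congrArg Matrix.det hiso
    rw [Matrix.det_mul, Matrix.det_mul, Matrix.det_transpose] at h
    have h2 : (Am.det * Am.det) * Bm.det = 1 * Bm.det := by rw [one_mul]; linear_combination h
    exact mul_right_cancel₀ hdet h2
  have hcancel : ∀ X Y : Matrix (Fin 3) (Fin 3) ℝ,
      Am.transpose * X = Am.transpose * Y → X = Y := by
    have e : ∀ X : Matrix (Fin 3) (Fin 3) ℝ, Sm.transpose * (Am.transpose * X) = X := by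
      intro X
      rw [← Matrix.mul_assoc, ← Matrix.transpose_mul, hAS, Matrix.transpose_one, Matrix.one_mul]
    intro X Y h
    rw [← e X, h, e Y]
  have hcof : cof Am * Bm = Am.det • (Bm * Am) := by
    apply hcancel
    rw [← Matrix.mul_assoc, transpose_mul_cof, Matrix.smul_mul, Matrix.one_mul, Matrix.mul_smul]
    congr 1
    rw [← Matrix.mul_assoc]
    exact hiso.symm
  have hLf : Lm (fun x y => A.symm (s33bracket α (A x) (A y))) = Sm * L0 * cof Am := by
    ext a m
    have h1 : A.symm (s33bracket α (A (ee (m+1))) (A (ee (m+2))))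
        = ((Sm * L0 * cof Am).mulVec (ee m)) := by
      rw [← matE_mulVec A.symm, ← hSm, s33_eq_mulVec, ← hL0,
        ← matE_mulVec A (ee (m+1)), ← matE_mulVec A (ee (m+2)), ← hAm,
        cp_equivariant, cp_ee, Matrix.mulVec_mulVec, Matrix.mulVec_mulVec]
    have h2 := congrFun h1 a
    simp only [Lm, Matrix.of_apply]
    rw [h2, mulVec_ee]
  have hMf : Lm (fun x y => A.symm (s33bracket α (A x) (A y))) * Bm
      = Am.det • (Sm * (L0 * Bm) * Am) := by
    rw [hLf, Matrix.mul_assoc (Sm * L0), hcof, Matrix.mul_smul]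
    congr 1
    simp only [Matrix.mul_assoc]
  have htr1 : (Sm * (L0 * Bm) * Am).trace = (L0 * Bm).trace := by
    rw [Matrix.trace_mul_cycle, ← Matrix.mul_assoc, hAS, Matrix.one_mul]
  have hsq : (Sm * (L0 * Bm) * Am) * (Sm * (L0 * Bm) * Am)
      = Sm * ((L0 * Bm) * (L0 * Bm)) * Am := by
    simp only [Matrix.mul_assoc]
    rw [← Matrix.mul_assoc Am Sm, hAS, Matrix.one_mul]
  have htr2 : ((Sm * (L0 * Bm) * Am) * (Sm * (L0 * Bm) * Am)).trace
      = ((L0 * Bm) * (L0 * Bm)).trace := by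
    rw [hsq, Matrix.trace_mul_cycle, ← Matrix.mul_assoc, hAS, Matrix.one_mul]
  have h4 : Am.det ^ 4 = 1 := by nlinarith [hdet2]
  simp only [Phi, hMf, Lm_s33 α, ← hL0, Matrix.trace_smul, smul_eq_mul,
    Matrix.smul_mul, Matrix.mul_smul, smul_smul, htr1, htr2]
  rw [mul_pow, h4, one_mul]
  congr 1
  rw [hdet2, one_mul]

/-! ### Nonvanishing of `Φ` at the `s33` bracket -/

lemma phi_ne (α : ℝ) (Bm : Matrix (Fin 3) (Fin 3) ℝ)
    (hsym : ∀ i j, Bm i j = Bm j i) (hdet : Bm.det ≠ 0) :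
    Phi Bm (s33bracket α) ≠ 0 := by
  intro h
  rw [Phi, Lm_s33] at h
  set L0 : Matrix (Fin 3) (Fin 3) ℝ := !![0,0,0;0,1,-α;0,α,1] with hL0
  set t := (L0 * Bm).trace with hts
  set s := ((L0 * Bm) * (L0 * Bm)).trace with hss
  have ht4 : t ^ 4 = 0 := le_antisymm (by nlinarith [sq_nonneg s]) (by positivity)
  have hs2 : s ^ 2 = 0 := by nlinarith [ht4]
  have ht : t = 0 := by
    have := pow_eq_zero_iff (n := 4) (by norm_num) |>.mp ht4
    exact this
  have hs : s = 0 := by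
    have := pow_eq_zero_iff (n := 2) (by norm_num) |>.mp hs2
    exact this
  rw [hts] at ht
  rw [hss] at hs
  simp [Matrix.trace, Matrix.mul_apply, Fin.sum_univ_three, Matrix.diag, hL0,
    Matrix.vecMul, dotProduct] at ht hs
  have hq : Bm 2 1 = Bm 1 2 := hsym 2 1
  rw [hq] at ht hs
  have key : (1 + α ^ 2) * (Bm 1 1 ^ 2 + Bm 1 2 ^ 2) * 2 = 0 := by
    linear_combination hs + (Bm 1 1 - Bm 2 2 + 2 * α ^ 2 * Bm 1 1) * ht
  have hp2 : Bm 1 1 ^ 2 = 0 := by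
    nlinarith [key, sq_nonneg α, sq_nonneg (Bm 1 1), sq_nonneg (Bm 1 2),
      sq_nonneg (α * Bm 1 1), sq_nonneg (α * Bm 1 2)]
  have hq2' : Bm 1 2 ^ 2 = 0 := by
    nlinarith [key, sq_nonneg α, sq_nonneg (Bm 1 1), sq_nonneg (Bm 1 2),
      sq_nonneg (α * Bm 1 1), sq_nonneg (α * Bm 1 2)]
  have hp : Bm 1 1 = 0 := pow_eq_zero_iff two_ne_zero |>.mp hp2
  have hqz : Bm 1 2 = 0 := pow_eq_zero_iff two_ne_zero |>.mp hq2'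
  have hr : Bm 2 2 = 0 := by linarith [ht, hp]
  have hq2 : Bm 2 1 = 0 := by rw [hq, hqz]
  apply hdet
  rw [Matrix.det_fin_three, hp, hqz, hr, hq2]
  ring

/-! ### Nondegeneracy gives an invertible Gram matrix -/

lemma det_ne (B : LinearMap.BilinForm ℝ (Fin 3 → ℝ))
    (hBnd : ∀ x, (∀ y, B x y = 0) → x = 0)
    (hBsymm : ∀ x y, B x y = B y x) :
    (Matrix.of fun i j => B (ee i) (ee j) : Matrix (Fin 3) (Fin 3) ℝ).det ≠ 0 := by
  intro h
  obtain ⟨v, hv, hv0⟩ := Matrix.exists_mulVec_eq_zero_iff.mpr h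
  apply hv
  apply hBnd
  intro y
  rw [bilin_expand B v y, Finset.sum_comm]
  apply Finset.sum_eq_zero
  intro j _
  have h1 := congrFun hv0 j
  simp [Matrix.mulVec, dotProduct, Fin.sum_univ_three] at h1
  rw [← Finset.sum_mul]
  have hz : ∑ i, v i * B (ee i) (ee j) = 0 := by
    simp only [Fin.sum_univ_three]
    rw [hBsymm (ee 0) (ee j), hBsymm (ee 1) (ee j), hBsymm (ee 2) (ee j)]
    linear_combination h1
  rw [hz, zero_mul]

/-- For every `α ≥ 0`, the Lie bracket of `s_{3,3}` is not in the null cone of the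
`O(B)`-action, for any nondegenerate symmetric bilinear form `B` on `ℝ³`. -/
theorem s33_not_in_null_cone (α : ℝ) (hα : 0 ≤ α)
    (B : LinearMap.BilinForm ℝ (Fin 3 → ℝ))
    (hBnd : ∀ x, (∀ y, B x y = 0) → x = 0)
    (hBsymm : ∀ x y, B x y = B y x) :
    ¬ InNullCone B (s33bracket α) := by
  intro hnull
  unfold InNullCone at hnull
  set Bm : Matrix (Fin 3) (Fin 3) ℝ := Matrix.of fun i j => B (ee i) (ee j) with hBm
  have hdet : Bm.det ≠ 0 := det_ne B hBnd hBsymm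
  have hsub : {f : (Fin 3 → ℝ) → (Fin 3 → ℝ) → (Fin 3 → ℝ) |
      ∃ A ∈ IsometryGrp B, f = fun x y => A.symm (s33bracket α (A x) (A y))}
      ⊆ Phi Bm ⁻¹' {Phi Bm (s33bracket α)} := by
    rintro f ⟨A, hA, rfl⟩
    exact phi_inv α B hdet A hA
  have hcl := closure_minimal hsub ((isClosed_singleton).preimage (Phi_continuous Bm))
  have h0 : Phi Bm 0 = Phi Bm (s33bracket α) := hcl hnull
  rw [Phi_zero] at h0
  exact phi_ne α Bm (fun i j => hBsymm (ee i) (ee j)) hdet h0.symm
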